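/- Let φ be a TeamLTL(∼)-formula and Φ = {π₁,…,πₖ} a finite set of trace variables, and let φ^Φ be the HyperLTL quantifier-free formula defined inductively by: p^Φ = ⋀_{π∈Φ} p_π; (¬p)^Φ = ⋀_{π∈Φ} ¬p_π; (∼φ)^Φ = the negation normal form of ¬(φ^Φ); (Xφ)^Φ = X(φ^Φ); (φ∧ψ)^Φ = φ^Φ ∧ ψ^Φ; (φ∨ψ)^Φ = ⋁_{Φ₀∪Φ₁=Φ} (φ^{Φ₀} ∧ ψ^{Φ₁}); (φUψ)^Φ = φ^Φ U ψ^Φ; (φWψ)^Φ = φ^Φ W ψ^Φ. Then for every team (T,i) with |T| ≤ k, every set S ⊇ T of traces, and every trace assignment Π with Π[Φ] = T: (T,i) ⊨ φ if and only if Π,i ⊨_S φ^Φ. Furthermore, if φ is downward closed and T ≠ ∅, then (T,i) ⊨ φ if and only if ∅,i ⊨_T ∀π₁…∀πₖ. φ^Φ. -/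
import Mathlib


set_option maxHeartbeats 1000000

universe u

/-- A trace over the set `α` of atomic propositions: an infinite sequence of
sets of propositions. -/
abbrev Trace (α : Type u) := ℕ → Set α

/-- LTL formulae in negation normal form. -/
inductive LTLForm (α : Type u) : Type u where
  | pos : α → LTLForm α
  | neg : α → LTLForm α
  | lor : LTLForm α → LTLForm α → LTLForm α
  | land : LTLForm α → LTLForm α → LTLForm α
  | next : LTLForm α → LTLForm α
  | luntil : LTLForm α → LTLForm α → LTLForm α
  | wuntil : LTLForm α → LTLForm α → LTLForm α

namespace LTLForm
variable {α : Type u}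

/-- Standard single-trace LTL semantics. -/
def sat (t : Trace α) : ℕ → LTLForm α → Prop
  | i, pos p => p ∈ t i
  | i, neg p => p ∉ t i
  | i, lor φ ψ => sat t i φ ∨ sat t i ψ
  | i, land φ ψ => sat t i φ ∧ sat t i ψ
  | i, next φ => sat t (i+1) φ
  | i, luntil φ ψ => ∃ k, i ≤ k ∧ sat t k ψ ∧ ∀ m, i ≤ m → m < k → sat t m φ
  | i, wuntil φ ψ => ∀ k, i ≤ k → sat t k φ ∨ ∃ m, i ≤ m ∧ m ≤ k ∧ sat t m ψ

/-- Size of an LTL formula. -/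
def size : LTLForm α → ℕ
  | pos _ => 1
  | neg _ => 1
  | lor φ ψ => φ.size + ψ.size + 1
  | land φ ψ => φ.size + ψ.size + 1
  | next φ => φ.size + 1
  | luntil φ ψ => φ.size + ψ.size + 1
  | wuntil φ ψ => φ.size + ψ.size + 1

end LTLForm

/-- Extensions of `TeamLTL` by atoms and connectives:
Boolean disjunction `⩔`, Boolean negation `∼`, inclusion atoms `⊆`,
the universal subteam quantifier `A`, the singleton subteam quantifier `A¹`
and the non-emptiness atom `∼⊥`. -/
inductive TExt : Type where
  | bdis | bneg | incl | asub | asub1 | nebot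
deriving DecidableEq

/-- Formulae of TeamLTL together with all the extensions considered in the paper
(fragments are carved out via `TeamForm.exts`). -/
inductive TeamForm (α : Type u) : Type u where
  | pos : α → TeamForm α
  | neg : α → TeamForm α
  | lor : TeamForm α → TeamForm α → TeamForm α
  | land : TeamForm α → TeamForm α → TeamForm α
  | next : TeamForm α → TeamForm α
  | luntil : TeamForm α → TeamForm α → TeamForm α
  | wuntil : TeamForm α → TeamForm α → TeamForm α
  | bdis : TeamForm α → TeamForm α → TeamForm α
  | bneg : TeamForm α → TeamForm α
  | incl : List (LTLForm α × LTLForm α) → TeamForm α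
  | asub : TeamForm α → TeamForm α
  | asub1 : TeamForm α → TeamForm α
  | nebot : TeamForm α

namespace TeamForm
variable {α : Type u}

/-- Synchronous team semantics for (extended) TeamLTL. -/
def sat : Set (Trace α) → ℕ → TeamForm α → Prop
  | T, i, pos p => ∀ t ∈ T, p ∈ t i
  | T, i, neg p => ∀ t ∈ T, p ∉ t i
  | T, i, lor φ ψ => ∃ T₁ T₂, T₁ ∪ T₂ = T ∧ sat T₁ i φ ∧ sat T₂ i ψ
  | T, i, land φ ψ => sat T i φ ∧ sat T i ψ
  | T, i, next φ => sat T (i+1) φ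
  | T, i, luntil φ ψ => ∃ k, i ≤ k ∧ sat T k ψ ∧ ∀ m, i ≤ m → m < k → sat T m φ
  | T, i, wuntil φ ψ => ∀ k, i ≤ k → sat T k φ ∨ ∃ m, i ≤ m ∧ m ≤ k ∧ sat T m ψ
  | T, i, bdis φ ψ => sat T i φ ∨ sat T i ψ
  | T, i, bneg φ => ¬ sat T i φ
  | T, i, incl ps => ∀ t ∈ T, ∃ t' ∈ T, ∀ p ∈ ps, (LTLForm.sat t i p.1 ↔ LTLForm.sat t' i p.2)
  | T, i, asub φ => ∀ S, S ⊆ T → sat S i φ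
  | T, i, asub1 φ => ∀ t ∈ T, sat {t} i φ
  | T, _, nebot => T.Nonempty

/-- The collection of extensions (atoms/connectives beyond core TeamLTL)
occurring in a formula. -/
def exts : TeamForm α → Set TExt
  | pos _ => ∅
  | neg _ => ∅
  | lor φ ψ => exts φ ∪ exts ψ
  | land φ ψ => exts φ ∪ exts ψ
  | next φ => exts φ
  | luntil φ ψ => exts φ ∪ exts ψ
  | wuntil φ ψ => exts φ ∪ exts ψ
  | bdis φ ψ => insert TExt.bdis (exts φ ∪ exts ψ)
  | bneg φ => insert TExt.bneg (exts φ)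
  | incl _ => {TExt.incl}
  | asub φ => insert TExt.asub (exts φ)
  | asub1 φ => insert TExt.asub1 (exts φ)
  | nebot => {TExt.nebot}

/-- Size of an (extended) TeamLTL formula. -/
def size : TeamForm α → ℕ
  | pos _ => 1
  | neg _ => 1
  | lor φ ψ => φ.size + ψ.size + 1
  | land φ ψ => φ.size + ψ.size + 1
  | next φ => φ.size + 1
  | luntil φ ψ => φ.size + ψ.size + 1
  | wuntil φ ψ => φ.size + ψ.size + 1
  | bdis φ ψ => φ.size + ψ.size + 1
  | bneg φ => φ.size + 1
  | incl ps => (ps.map (fun p => p.1.size + p.2.size)).sum + 1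
  | asub φ => φ.size + 1
  | asub1 φ => φ.size + 1
  | nebot => 1

end TeamForm

universe v

/-- Quantifier-free formulae of HyperLTL / HyperQPTL(⁺) over atomic
propositions `α` and trace variables `V`, in negation normal form. -/
inductive QF (α : Type u) (V : Type v) : Type (max u v) where
  | pos : α → V → QF α V
  | neg : α → V → QF α V
  | lor : QF α V → QF α V → QF α V
  | land : QF α V → QF α V → QF α V
  | next : QF α V → QF α V
  | luntil : QF α V → QF α V → QF α V
  | wuntil : QF α V → QF α V → QF α V

namespace QF
variable {α : Type u} {V : Type v}

/-- Semantics of quantifier-free hyperlogic formulae with respect to a trace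
assignment `asgn` and a time point `i` (time advances uniformly on all
traces). -/
def sat (asgn : V → Trace α) : ℕ → QF α V → Prop
  | i, pos p π => p ∈ asgn π i
  | i, neg p π => p ∉ asgn π i
  | i, lor φ ψ => sat asgn i φ ∨ sat asgn i ψ
  | i, land φ ψ => sat asgn i φ ∧ sat asgn i ψ
  | i, next φ => sat asgn (i+1) φ
  | i, luntil φ ψ => ∃ k, i ≤ k ∧ sat asgn k ψ ∧ ∀ m, i ≤ m → m < k → sat asgn m φ
  | i, wuntil φ ψ => ∀ k, i ≤ k → sat asgn k φ ∨ ∃ m, i ≤ m ∧ m ≤ k ∧ sat asgn m ψ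

/-- Size of a quantifier-free formula. -/
def size : QF α V → ℕ
  | pos _ _ => 1
  | neg _ _ => 1
  | lor φ ψ => φ.size + ψ.size + 1
  | land φ ψ => φ.size + ψ.size + 1
  | next φ => φ.size + 1
  | luntil φ ψ => φ.size + ψ.size + 1
  | wuntil φ ψ => φ.size + ψ.size + 1

/-- Negation of a quantifier-free formula, in negation normal form. -/
def dual : QF α V → QF α V
  | pos p π => neg p π
  | neg p π => pos p π
  | lor φ ψ => land (dual φ) (dual ψ)
  | land φ ψ => lor (dual φ) (dual ψ)
  | next φ => next (dual φ)
  | luntil φ ψ => wuntil (dual ψ) (land (dual φ) (dual ψ))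
  | wuntil φ ψ => luntil (dual ψ) (land (dual φ) (dual ψ))

end QF

/-- Formulae of HyperQPTL⁺: a quantifier prefix consisting of trace
quantifiers (`exTr`/`allTr`), uniform propositional quantifiers
(`exU`/`allU`) and non-uniform propositional quantifiers (`exN`/`allN`),
followed by a quantifier-free formula.  HyperQPTL is the fragment without
`exN`/`allN`; HyperLTL is the fragment with only trace quantifiers. -/
inductive HQ (α : Type u) (V : Type v) : Type (max u v) where
  | qf : QF α V → HQ α V
  | exTr : V → HQ α V → HQ α V
  | allTr : V → HQ α V → HQ α V
  | exU : α → HQ α V → HQ α V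
  | allU : α → HQ α V → HQ α V
  | exN : α → HQ α V → HQ α V
  | allN : α → HQ α V → HQ α V

namespace HQ
variable {α : Type u} {V : Type v}

/-- Reinterpretation of the proposition `q` along a trace according to the
`q`-sequence `s`. -/
def reint (q : α) (s : ℕ → Prop) (t : Trace α) : Trace α :=
  fun j => {a | (a = q ∧ s j) ∨ (a ≠ q ∧ a ∈ t j)}

/-- Projection of a trace to the propositions other than `q`. -/
def proj (q : α) (t : Trace α) : Trace α :=
  fun j => {a | a ≠ q ∧ a ∈ t j}

/-- Semantics of HyperQPTL⁺ over a set `T` of traces, a trace assignment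
`asgn` and a time point `i`. -/
def sat [DecidableEq V] (T : Set (Trace α)) (asgn : V → Trace α) (i : ℕ) :
    HQ α V → Prop
  | qf ψ => QF.sat asgn i ψ
  | exTr π φ => ∃ t ∈ T, sat T (Function.update asgn π t) i φ
  | allTr π φ => ∀ t ∈ T, sat T (Function.update asgn π t) i φ
  | exU q φ => ∃ s : ℕ → Prop,
      sat ((reint q s) '' T) (fun π => reint q s (asgn π)) i φ
  | allU q φ => ∀ s : ℕ → Prop,
      sat ((reint q s) '' T) (fun π => reint q s (asgn π)) i φ
  | exN q φ => ∃ (T' : Set (Trace α)) (asgn' : V → Trace α),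
      (proj q '' T = proj q '' T') ∧ (∀ π, proj q (asgn π) = proj q (asgn' π)) ∧
      (∀ π, asgn' π ∈ T') ∧ sat T' asgn' i φ
  | allN q φ => ∀ (T' : Set (Trace α)) (asgn' : V → Trace α),
      (proj q '' T = proj q '' T') → (∀ π, proj q (asgn π) = proj q (asgn' π)) →
      (∀ π, asgn' π ∈ T') → sat T' asgn' i φ

/-- A sentence is satisfied by a set of traces at time `i` if it holds under
every (equivalently, under some) trace assignment. -/
def sentSat [DecidableEq V] (T : Set (Trace α)) (i : ℕ) (φ : HQ α V) : Prop :=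
  ∀ asgn : V → Trace α, sat T asgn i φ

/-- Size of a HyperQPTL⁺ formula. -/
def size : HQ α V → ℕ
  | qf ψ => ψ.size + 1
  | exTr _ φ => φ.size + 1
  | allTr _ φ => φ.size + 1
  | exU _ φ => φ.size + 1
  | allU _ φ => φ.size + 1
  | exN _ φ => φ.size + 1
  | allN _ φ => φ.size + 1

end HQ

/-- Lifting a trace over `α` to a trace over `α ⊕ ℕ` (the original
propositions, together with countably many fresh propositions that never
hold). -/
def liftTrace {α : Type u} (t : Trace α) : Trace (α ⊕ ℕ) :=
  fun j => Sum.inl '' t j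

/-- Lifting a team over `α` to a team over `α ⊕ ℕ`. -/
def liftTeam {α : Type u} (T : Set (Trace α)) : Set (Trace (α ⊕ ℕ)) :=
  liftTrace '' T

namespace PhiTr
variable {α : Type u} {V : Type v}

/-- A tautological quantifier-free formula `⊤ := p_π ∨ ¬p_π`
(`d` and `v` are default proposition/variable symbols). -/
def topQ (d : α) (v : V) : QF α V := .lor (.pos d v) (.neg d v)

/-- An unsatisfiable quantifier-free formula `⊥ := p_π ∧ ¬p_π`. -/
def botQ (d : α) (v : V) : QF α V := .land (.pos d v) (.neg d v)

/-- Big conjunction of a list of quantifier-free formulae. -/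
def bigAndQ (d : α) (v : V) : List (QF α V) → QF α V
  | [] => topQ d v
  | [φ] => φ
  | φ :: φs => .land φ (bigAndQ d v φs)

/-- Big disjunction of a list of quantifier-free formulae. -/
def bigOrQ (d : α) (v : V) : List (QF α V) → QF α V
  | [] => botQ d v
  | [φ] => φ
  | φ :: φs => .lor φ (bigOrQ d v φs)

/-- The translation `φ ↦ φ^Φ` from `TeamLTL(∼)` to quantifier-free HyperLTL:
`p^Φ = ⋀_{π∈Φ} p_π`, `(¬p)^Φ = ⋀_{π∈Φ} ¬p_π`, `(∼φ)^Φ = nnf of ¬(φ^Φ)`,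
`(Xφ)^Φ = X(φ^Φ)`, `(φ∧ψ)^Φ = φ^Φ ∧ ψ^Φ`,
`(φ∨ψ)^Φ = ⋁_{Φ₀∪Φ₁=Φ} (φ^{Φ₀} ∧ ψ^{Φ₁})`, `(φUψ)^Φ = φ^Φ U ψ^Φ`,
`(φWψ)^Φ = φ^Φ W ψ^Φ`.  (Clauses for connectives outside of `TeamLTL(∼)`
are irrelevant.) -/
noncomputable def trPhi [DecidableEq V] (d : α) (v : V) : TeamForm α → Finset V → QF α V
  | .pos p, Φ => bigAndQ d v (Φ.toList.map fun π => .pos p π)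
  | .neg p, Φ => bigAndQ d v (Φ.toList.map fun π => .neg p π)
  | .bneg φ, Φ => (trPhi d v φ Φ).dual
  | .next φ, Φ => .next (trPhi d v φ Φ)
  | .land φ ψ, Φ => .land (trPhi d v φ Φ) (trPhi d v ψ Φ)
  | .lor φ ψ, Φ => bigOrQ d v
      ((((Φ.powerset ×ˢ Φ.powerset).filter (fun P => P.1 ∪ P.2 = Φ)).toList).map
        (fun P => .land (trPhi d v φ P.1) (trPhi d v ψ P.2)))
  | .luntil φ ψ, Φ => .luntil (trPhi d v φ Φ) (trPhi d v ψ Φ)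
  | .wuntil φ ψ, Φ => .wuntil (trPhi d v φ Φ) (trPhi d v ψ Φ)
  | _, _ => topQ d v

/-- A TeamLTL formula is downward closed if its satisfaction is inherited by
all subteams. -/
def DownwardClosed (φ : TeamForm α) : Prop :=
  ∀ (T S : Set (Trace α)) (i : ℕ), S ⊆ T → TeamForm.sat T i φ → TeamForm.sat S i φ

/-- A TeamLTL formula is `k`-coherent if its satisfaction by a team is
equivalent to its satisfaction by all subteams of size at most `k`. -/
def KCoherent (k : ℕ) (φ : TeamForm α) : Prop :=
  ∀ (T : Set (Trace α)) (i : ℕ),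
    TeamForm.sat T i φ ↔ ∀ S ⊆ T, S.Finite → S.ncard ≤ k → TeamForm.sat S i φ

end PhiTr

namespace Stmt6
open PhiTr
variable {α : Type u} {V : Type v}

lemma sat_topQ (d : α) (v : V) (asgn : V → Trace α) (i : ℕ) :
    QF.sat asgn i (topQ d v) := by
  simp only [topQ, QF.sat]; exact Classical.em _

lemma not_sat_botQ (d : α) (v : V) (asgn : V → Trace α) (i : ℕ) :
    ¬ QF.sat asgn i (botQ d v) := by
  simp only [botQ, QF.sat]; tauto

lemma sat_bigAndQ (d : α) (v : V) (asgn : V → Trace α) (i : ℕ) :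
    ∀ L : List (QF α V), QF.sat asgn i (bigAndQ d v L) ↔ ∀ ψ ∈ L, QF.sat asgn i ψ
  | [] => by simp [bigAndQ, sat_topQ]
  | [ψ] => by simp [bigAndQ]
  | ψ :: χ :: L => by
    have ih := sat_bigAndQ d v asgn i (χ :: L)
    simp only [bigAndQ, QF.sat, ih]
    simp

lemma sat_bigOrQ (d : α) (v : V) (asgn : V → Trace α) (i : ℕ) :
    ∀ L : List (QF α V), QF.sat asgn i (bigOrQ d v L) ↔ ∃ ψ ∈ L, QF.sat asgn i ψ
  | [] => by simp [bigOrQ, not_sat_botQ d v asgn i]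
  | [ψ] => by simp [bigOrQ]
  | ψ :: χ :: L => by
    have ih := sat_bigOrQ d v asgn i (χ :: L)
    simp only [bigOrQ, QF.sat, ih]
    simp

lemma not_until_iff (P Q : ℕ → Prop) (i : ℕ) :
    (∀ k, i ≤ k → ¬ Q k ∨ ∃ m, i ≤ m ∧ m ≤ k ∧ (¬ P m ∧ ¬ Q m)) ↔
    ¬ (∃ k, i ≤ k ∧ Q k ∧ ∀ m, i ≤ m → m < k → P m) := by
  constructor
  · rintro h ⟨k, hik, hQ, hP⟩
    rcases h k hik with h' | ⟨m, him, hmk, hnP, hnQ⟩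
    · exact h' hQ
    · rcases lt_or_eq_of_le hmk with h'' | rfl
      · exact hnP (hP m him h'')
      · exact hnQ hQ
  · intro h k hik
    by_contra hc
    push_neg at hc
    obtain ⟨hQk, hc⟩ := hc
    have hex : ∃ m, i ≤ m ∧ Q m := ⟨k, hik, hQk⟩
    classical
    set m₀ := Nat.find hex with hm₀
    obtain ⟨him₀, hQm₀⟩ := Nat.find_spec hex
    have hm₀k : m₀ ≤ k := Nat.find_min' hex ⟨hik, hQk⟩
    refine h ⟨m₀, him₀, hQm₀, fun m him hmm₀ => ?_⟩
    have hnQ : ¬ Q m := fun hQ => Nat.find_min hex hmm₀ ⟨him, hQ⟩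
    by_contra hnP
    exact hnQ (hc m him (le_trans (le_of_lt hmm₀) hm₀k) hnP)

lemma not_wuntil_iff (P Q : ℕ → Prop) (i : ℕ) :
    (∃ k, i ≤ k ∧ (¬ P k ∧ ¬ Q k) ∧ ∀ m, i ≤ m → m < k → ¬ Q m) ↔
    ¬ (∀ k, i ≤ k → P k ∨ ∃ m, i ≤ m ∧ m ≤ k ∧ Q m) := by
  constructor
  · rintro ⟨k, hik, ⟨hnP, hnQ⟩, hall⟩ h
    rcases h k hik with hP | ⟨m, him, hmk, hQ⟩
    · exact hnP hP
    · rcases lt_or_eq_of_le hmk with h'' | rfl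
      · exact hall m him h'' hQ
      · exact hnQ hQ
  · intro h
    push_neg at h
    obtain ⟨k, hik, hnP, hall⟩ := h
    exact ⟨k, hik, ⟨hnP, hall k hik le_rfl⟩, fun m him hmk => hall m him (le_of_lt hmk)⟩

lemma sat_dual (asgn : V → Trace α) (ψ : QF α V) :
    ∀ i, QF.sat asgn i ψ.dual ↔ ¬ QF.sat asgn i ψ := by
  induction ψ with
  | pos p π => intro i; simp [QF.dual, QF.sat]
  | neg p π => intro i; simp [QF.dual, QF.sat]
  | lor φ ψ ihφ ihψ => intro i; simp only [QF.dual, QF.sat, ihφ, ihψ]; tauto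
  | land φ ψ ihφ ihψ => intro i; simp only [QF.dual, QF.sat, ihφ, ihψ]; tauto
  | next φ ih => intro i; simp only [QF.dual, QF.sat, ih]
  | luntil φ ψ ihφ ihψ =>
    intro i
    simp only [QF.dual, QF.sat, ihφ, ihψ]
    exact not_until_iff (fun j => QF.sat asgn j φ) (fun j => QF.sat asgn j ψ) i
  | wuntil φ ψ ihφ ihψ =>
    intro i
    simp only [QF.dual, QF.sat, ihφ, ihψ]
    exact not_wuntil_iff (fun j => QF.sat asgn j φ) (fun j => QF.sat asgn j ψ) i

lemma main [DecidableEq V] (d : α) (v : V) (φ : TeamForm α) :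
    φ.exts ⊆ {TExt.bneg} →
    ∀ (Φ : Finset V) (asgn : V → Trace α) (i : ℕ),
      TeamForm.sat (asgn '' ↑Φ) i φ ↔ QF.sat asgn i (trPhi d v φ Φ) := by
  induction φ with
  | pos p =>
    intro _ Φ asgn i
    simp [TeamForm.sat, trPhi, sat_bigAndQ, QF.sat, Set.forall_mem_image]
  | neg p =>
    intro _ Φ asgn i
    simp [TeamForm.sat, trPhi, sat_bigAndQ, QF.sat, Set.forall_mem_image]
  | lor φ ψ ihφ ihψ =>
    intro hφ Φ asgn i
    simp only [TeamForm.exts, Set.union_subset_iff] at hφ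
    have ih1 := ihφ hφ.1
    have ih2 := ihψ hφ.2
    simp only [TeamForm.sat, trPhi, sat_bigOrQ]
    constructor
    · rintro ⟨T₁, T₂, hUn, h1, h2⟩
      classical
      set Φ₀ := Φ.filter (fun π => asgn π ∈ T₁) with hΦ₀
      set Φ₁ := Φ.filter (fun π => asgn π ∈ T₂) with hΦ₁
      have hcup : Φ₀ ∪ Φ₁ = Φ := by
        ext π
        simp only [hΦ₀, hΦ₁, Finset.mem_union, Finset.mem_filter]
        constructor
        · rintro (⟨h, _⟩ | ⟨h, _⟩) <;> exact h
        · intro hπ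
          have : asgn π ∈ T₁ ∪ T₂ := by
            rw [hUn]; exact ⟨π, hπ, rfl⟩
          rcases this with h | h
          · exact Or.inl ⟨hπ, h⟩
          · exact Or.inr ⟨hπ, h⟩
      have him : ∀ (Ψ : Finset V) (U W : Set (Trace α)),
          Ψ = Φ.filter (fun π => asgn π ∈ U) → U ∪ W = asgn '' ↑Φ →
          asgn '' ↑Ψ = U ∪ (asgn '' ↑Ψ ∩ U) := by
        intro Ψ U W hΨ hUW
        subst hΨ
        ext t
        constructor
        · rintro ⟨π, hπ, rfl⟩
          simp only [Finset.coe_filter, Set.mem_setOf_eq] at hπ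
          exact Or.inl hπ.2
        · rintro (ht | ⟨ht, _⟩)
          · have : t ∈ asgn '' ↑Φ := by rw [← hUW]; exact Or.inl ht
            obtain ⟨π, hπ, rfl⟩ := this
            refine ⟨π, ?_, rfl⟩
            simp only [Finset.coe_filter, Set.mem_setOf_eq]
            exact ⟨hπ, ht⟩
          · exact ht
      have h₀ : asgn '' ↑Φ₀ = T₁ := by
        have := him Φ₀ T₁ T₂ hΦ₀ hUn
        rw [this]
        have : asgn '' ↑Φ₀ ∩ T₁ ⊆ T₁ := Set.inter_subset_right
        exact Set.union_eq_self_of_subset_right this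
      have h₁ : asgn '' ↑Φ₁ = T₂ := by
        have := him Φ₁ T₂ T₁ hΦ₁ (by rw [Set.union_comm]; exact hUn)
        rw [this]
        exact Set.union_eq_self_of_subset_right Set.inter_subset_right
      refine ⟨.land (trPhi d v φ Φ₀) (trPhi d v ψ Φ₁), ?_, ?_⟩
      · simp only [List.mem_map, Finset.mem_toList, Finset.mem_filter,
          Finset.mem_product, Finset.mem_powerset]
        refine ⟨(Φ₀, Φ₁), ⟨⟨?_, ?_⟩, hcup⟩, rfl⟩
        · exact Finset.filter_subset _ _
        · exact Finset.filter_subset _ _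
      · refine ⟨?_, ?_⟩
        · exact (ih1 Φ₀ asgn i).mp (by rw [h₀]; exact h1)
        · exact (ih2 Φ₁ asgn i).mp (by rw [h₁]; exact h2)
    · rintro ⟨χ, hmem, hsat⟩
      simp only [List.mem_map, Finset.mem_toList, Finset.mem_filter,
        Finset.mem_product, Finset.mem_powerset] at hmem
      obtain ⟨⟨Φ₀, Φ₁⟩, ⟨⟨_, _⟩, hcup⟩, rfl⟩ := hmem
      obtain ⟨hs1, hs2⟩ := hsat
      refine ⟨asgn '' ↑Φ₀, asgn '' ↑Φ₁, ?_, (ih1 Φ₀ asgn i).mpr hs1, (ih2 Φ₁ asgn i).mpr hs2⟩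
      rw [← Set.image_union, ← Finset.coe_union, hcup]
  | land φ ψ ihφ ihψ =>
    intro hφ Φ asgn i
    simp only [TeamForm.exts, Set.union_subset_iff] at hφ
    simp only [TeamForm.sat, trPhi, QF.sat, ihφ hφ.1 Φ asgn, ihψ hφ.2 Φ asgn]
  | next φ ih =>
    intro hφ Φ asgn i
    simp only [TeamForm.exts] at hφ
    simp only [TeamForm.sat, trPhi, QF.sat, ih hφ Φ asgn]
  | luntil φ ψ ihφ ihψ =>
    intro hφ Φ asgn i
    simp only [TeamForm.exts, Set.union_subset_iff] at hφ
    simp only [TeamForm.sat, trPhi, QF.sat, ihφ hφ.1 Φ asgn, ihψ hφ.2 Φ asgn]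
  | wuntil φ ψ ihφ ihψ =>
    intro hφ Φ asgn i
    simp only [TeamForm.exts, Set.union_subset_iff] at hφ
    simp only [TeamForm.sat, trPhi, QF.sat, ihφ hφ.1 Φ asgn, ihψ hφ.2 Φ asgn]
  | bneg φ ih =>
    intro hφ Φ asgn i
    simp only [TeamForm.exts, Set.insert_subset_iff] at hφ
    simp only [TeamForm.sat, trPhi, sat_dual, ih hφ.2 Φ asgn]
  | bdis φ ψ _ _ =>
    intro hφ
    exact absurd (hφ (Set.mem_insert _ _)) (by simp)
  | incl ps =>
    intro hφ
    exact absurd (hφ rfl) (by simp)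
  | asub φ _ =>
    intro hφ
    exact absurd (hφ (Set.mem_insert _ _)) (by simp)
  | asub1 φ _ =>
    intro hφ
    exact absurd (hφ (Set.mem_insert _ _)) (by simp)
  | nebot =>
    intro hφ
    exact absurd (hφ rfl) (by simp)

/-- Let `φ` be a `TeamLTL(∼)`-formula and `Φ = {π₁,…,πₖ}` a
finite set of trace variables.  For every team `(T,i)` with `|T| ≤ k`, every
set `S ⊇ T` of traces, and every trace assignment `Π` with `Π[Φ] = T`:
`(T,i) ⊨ φ` iff `Π,i ⊨_S φ^Φ`.  Furthermore, if `φ` is downward closed and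
`T ≠ ∅`, then `(T,i) ⊨ φ` iff `∅,i ⊨_T ∀π₁…∀πₖ.φ^Φ`.  (Note that the
satisfaction of the quantifier-free formula `φ^Φ` does not depend on the
ambient trace set `S`, and the semantics of `∀π₁…∀πₖ.φ^Φ` is unfolded as
satisfaction under every assignment sending the variables of `Φ` into `T`.) -/
theorem stmt_6 [DecidableEq V] [Inhabited α] [Inhabited V]
    (φ : TeamForm α) (hφ : φ.exts ⊆ {TExt.bneg})
    (k : ℕ) (Φ : Finset V) (hΦ : Φ.card = k)
    (T S : Set (Trace α)) (i : ℕ) (hTk : T.ncard ≤ k) (hTS : T ⊆ S)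
    (asgn : V → Trace α) (hasgn : asgn '' ↑Φ = T) :
    (TeamForm.sat T i φ ↔ QF.sat asgn i (trPhi default default φ Φ)) ∧
    (DownwardClosed φ → T.Nonempty →
      (TeamForm.sat T i φ ↔
        ∀ asgn' : V → Trace α, (∀ π ∈ Φ, asgn' π ∈ T) →
          QF.sat asgn' i (trPhi default default φ Φ))) := by
  have hmain := main (V := V) (default : α) (default : V) φ hφ
  constructor
  · rw [← hasgn]; exact hmain Φ asgn i
  · intro hdc hne
    constructor
    · intro hsat asgn' hmem
      have hsub : asgn' '' ↑Φ ⊆ T := by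
        rintro t ⟨π, hπ, rfl⟩; exact hmem π hπ
      exact (hmain Φ asgn' i).mp (hdc T _ i hsub hsat)
    · intro hall
      have h1 : ∀ π ∈ Φ, asgn π ∈ T := by
        intro π hπ; rw [← hasgn]; exact ⟨π, hπ, rfl⟩
      rw [← hasgn]
      exact (hmain Φ asgn i).mpr (hall asgn h1)

end Stmt6
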